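/- In the well-pointed endofunctor setting below, for every object X of C the canonical comparison morphism T (U X) ⟶ U (T X) is an isomorphism. Here this morphism is determined on the colimit leg at stage n (whose source is U^{n+1} X) as U applied to the stage-n colimit leg of ch(X); it is well defined because, by well-pointedness, the chain ch(U X) coincides with the composite chain ch(X) ⋙ U. (This is the general form of the paper's proposition that the natural map (−)^B ∘ U → U ∘ (−)^B is an equivalence.) -/

import Mathlib

open CategoryTheory CategoryTheory.Limits

universe v u

variable {C : Type u} [Category.{v} C]

def funIter (U : C ⥤ C) : ℕ → C ⥤ C
  | 0 => 𝟭 C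
  | n + 1 => funIter U n ⋙ U

lemma funIter_obj_comm (U : C ⥤ C) (n : ℕ) (X : C) :
    (funIter U n).obj (U.obj X) = U.obj ((funIter U n).obj X) := by
  induction n with
  | zero => rfl
  | succ n ih =>
      show U.obj ((funIter U n).obj (U.obj X)) = U.obj (U.obj ((funIter U n).obj X))
      rw [ih]

/-- The chain `X ⟶ U X ⟶ U² X ⟶ ⋯` with transition maps `α.app (Uⁿ X)`. -/
def chain (U : C ⥤ C) (α : 𝟭 C ⟶ U) (A : C) : ℕ ⥤ C :=
  Functor.ofSequence (X := fun n => (funIter U n).obj A)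
    (fun n => α.app ((funIter U n).obj A))

/-- The functorial action of the chain construction. -/
def chainMap (U : C ⥤ C) (α : 𝟭 C ⟶ U) {A B : C} (f : A ⟶ B) :
    chain U α A ⟶ chain U α B :=
  NatTrans.ofSequence (F := chain U α A) (G := chain U α B)
    (fun n => (funIter U n).map f)
    (fun n => by
      simp only [chain]
      erw [Functor.ofSequence_map_homOfLE_succ, Functor.ofSequence_map_homOfLE_succ]
      exact (α.naturality ((funIter U n).map f)).symm)

variable [HasColimitsOfShape ℕ C]

/-- `T X`, the colimit of the chain `X ⟶ U X ⟶ U² X ⟶ ⋯`. -/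
noncomputable def Tobj (U : C ⥤ C) (α : 𝟭 C ⟶ U) (A : C) : C :=
  colimit (chain U α A)

/-- The action of `T` on morphisms. -/
noncomputable def Tmap (U : C ⥤ C) (α : 𝟭 C ⟶ U) {A B : C} (f : A ⟶ B) :
    Tobj U α A ⟶ Tobj U α B :=
  colimMap (chainMap U α f)

/-- The component `ι.app A : A ⟶ T A`, the colimit cocone leg at stage `0`. -/
noncomputable def tUnit (U : C ⥤ C) (α : 𝟭 C ⟶ U) (A : C) : A ⟶ Tobj U α A :=
  colimit.ι (chain U α A) 0


/-- The canonical comparison `T (U X) ⟶ U (T X)`, determined on the colimit leg at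
stage `n` (whose source is `Uⁿ (U X) = Uⁿ⁺¹ X`) as `U` applied to the stage-`n`
colimit leg of the chain of `X`; it is a well-defined cocone thanks to
well-pointedness of `α`. -/
noncomputable def cmpMap (U : C ⥤ C) (α : 𝟭 C ⟶ U)
    (hwp : ∀ X : C, U.map (α.app X) = α.app (U.obj X)) (X : C) :
    Tobj U α (U.obj X) ⟶ U.obj (Tobj U α X) :=
  colimit.desc (chain U α (U.obj X))
    { pt := U.obj (Tobj U α X)
      ι := NatTrans.ofSequence
        (fun n => eqToHom (funIter_obj_comm U n X) ≫ U.map (colimit.ι (chain U α X) n))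
        (fun n => by
          have hw := colimit.w (chain U α X) (homOfLE (n.le_add_right 1))
          simp only [chain] at hw ⊢
          erw [Functor.ofSequence_map_homOfLE_succ] at hw
          erw [Functor.ofSequence_map_homOfLE_succ]
          have hnat := α.naturality (eqToHom (funIter_obj_comm U n X))
          simp only [Functor.id_map, eqToHom_map] at hnat
          simp only [Functor.const_obj_map, Category.comp_id, ← hw, Functor.map_comp, hwp,
            ← Category.assoc]
          erw [Category.comp_id, Functor.map_comp, hwp, ← Category.assoc, ← Category.assoc, ← hnat]
          rfl) }


/-! By well-pointedness, the chain of `U X` is the chain of `X` followed by `U`, up to the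
identifications `Uⁿ (U X) = U (Uⁿ X)`. Hence `cmpMap` is the isomorphism of colimits induced by
this identification of chains, followed by the inverse of the isomorphism
`colim (ch(X) ⋙ U) ≅ U (colim ch(X))` expressing that `U` preserves sequential colimits. -/

section

variable (U : C ⥤ C) (α : 𝟭 C ⟶ U)

omit [HasColimitsOfShape ℕ C] in
lemma chain_U_obj_map_succ_comp_eqToHom (hwp : ∀ X : C, U.map (α.app X) = α.app (U.obj X))
    (X : C) (n : ℕ) :
    (chain U α (U.obj X)).map (homOfLE (n.le_add_right 1)) ≫
        eqToHom (funIter_obj_comm U (n + 1) X) =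
      eqToHom (funIter_obj_comm U n X) ≫
        (chain U α X ⋙ U).map (homOfLE (n.le_add_right 1)) := by
  simp only [chain, Functor.comp_map]
  erw [Functor.ofSequence_map_homOfLE_succ, Functor.ofSequence_map_homOfLE_succ, hwp]
  have hnat := α.naturality (eqToHom (funIter_obj_comm U n X))
  simp only [Functor.id_map, eqToHom_map] at hnat
  exact hnat.symm

omit [HasColimitsOfShape ℕ C] in
def chainUObjIso (hwp : ∀ X : C, U.map (α.app X) = α.app (U.obj X)) (X : C) :
    chain U α (U.obj X) ≅ chain U α X ⋙ U :=
  NatIso.ofComponents (fun n => eqToIso (funIter_obj_comm U n X))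
    fun f => (NatTrans.ofSequence (fun n => eqToHom (funIter_obj_comm U n X))
      (chain_U_obj_map_succ_comp_eqToHom U α hwp X)).naturality f

lemma cmpMap_eq_isoOfNatIso_trans_hom [PreservesColimitsOfShape ℕ U]
    (hwp : ∀ X : C, U.map (α.app X) = α.app (U.obj X)) (X : C) :
    cmpMap U α hwp X =
      (HasColimit.isoOfNatIso (chainUObjIso U α hwp X) ≪≫
        (preservesColimitIso U (chain U α X)).symm).hom := by
  refine colimit.hom_ext fun n => ?_
  simp only [cmpMap, colimit.ι_desc, NatTrans.ofSequence_app, Iso.trans_hom, Iso.symm_hom]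
  erw [HasColimit.isoOfNatIso_ι_hom_assoc, ι_preservesColimitIso_inv]
  rfl

end

theorem stmt2 (U : C ⥤ C) (α : 𝟭 C ⟶ U)
    [PreservesColimitsOfShape ℕ U]
    (hwp : ∀ X : C, U.map (α.app X) = α.app (U.obj X)) (X : C) :
    IsIso (cmpMap U α hwp X) := by
  rw [cmpMap_eq_isoOfNatIso_trans_hom]
  exact Iso.isIso_hom _
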